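/- arXiv:1810.05042 — 4 statements merged into one kernel-verified Lean document; each statement's English description precedes it below -/
import Mathlib

section
/- Let ε_i, ε_j, ε_{j'} be three mutually independent random vectors in ℝ^p with i.i.d. N(0,σ²) coordinates, let c_{ij}, c_{ij'} ∈ ℝ^p be fixed vectors, and set A_{ij} = ‖c_{ij} + ε_i − ε_j‖₂, A_{ij'} = ‖c_{ij'} + ε_i − ε_{j'}‖₂, λ_{ij} = ‖c_{ij}‖₂/(√2 σ), λ_{ij'} = ‖c_{ij'}‖₂/(√2 σ). Then E(A_{ij}² A_{ij'}²) ≤ 4σ⁴ √( [ (p + λ_{ij}²)² + 2(p + 2λ_{ij}²) ] · [ (p + λ_{ij'}²)² + 2(p + 2λ_{ij'}²) ] ). -/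
/-!
By Cauchy–Schwarz it suffices to compute `E ‖c + ε_i - ε_j‖⁴` for `i ≠ j`. The coordinates
`Y_k = c_k + ε_i k - ε_j k` are pairwise independent with law `N(c_k, 2σ²)`, so for
`S = ∑ Y_k²` we get `E S² = (E S)² + ∑ Var(Y_k²)`, a noncentral chi-square computation.
The Gaussian moments `E Y² = μ² + v` and `E Y⁴ = μ⁴ + 6μ²v + 3v²` are read off the derivatives
at `0` of the moment generating function `exp (μ t + v t² / 2)`.
-/

open MeasureTheory ProbabilityTheory

/-- A family of random vectors in `ℝ^p` such that all coordinates (across the whole family)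
are mutually independent and each coordinate is Gaussian `N(0, σ²)`. -/
def IIDGaussianCoords {Ω : Type*} [MeasurableSpace Ω] (P : Measure Ω)
    {ι : Type*} {p : ℕ} (σ : ℝ) (ε : ι → Ω → EuclideanSpace ℝ (Fin p)) : Prop :=
  (∀ i, Measurable (ε i)) ∧
  iIndepFun (fun q : ι × Fin p => fun ω => ε q.1 ω q.2) P ∧
  ∀ i k, Measure.map (fun ω => ε i ω k) P = gaussianReal 0 ⟨σ ^ 2, sq_nonneg σ⟩

open Polynomial
open scoped NNReal

namespace ProbabilityTheory

section GaussianMoments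

variable {μ : ℝ} {v : ℝ≥0}

/-- `d/dt (q t * m t) = (gaussianMgfStep μ v q).eval t * m t` for the mgf
`m t = exp (μ t + v t² / 2)` of `gaussianReal μ v`. -/
noncomputable def gaussianMgfStep (μ : ℝ) (v : ℝ≥0) (q : ℝ[X]) : ℝ[X] :=
  derivative q + q * (C μ + C (v : ℝ) * X)

lemma iteratedDeriv_mgf_gaussianReal (n : ℕ) :
    iteratedDeriv n (mgf id (gaussianReal μ v))
      = fun t => ((gaussianMgfStep μ v)^[n] 1).eval t * mgf id (gaussianReal μ v) t := by
  induction n with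
  | zero => simp
  | succ n ih =>
    rw [iteratedDeriv_succ, ih, Function.iterate_succ_apply', gaussianMgfStep]
    ext t
    have hexponent : HasDerivAt (fun t => μ * t + v * t ^ 2 / 2) (μ + v * t) t :=
      (((hasDerivAt_id' t).const_mul μ).fun_add
        (((hasDerivAt_pow 2 t).const_mul (v : ℝ)).div_const 2)).congr_deriv (by norm_num; ring)
    simp only [mgf_id_gaussianReal]
    rw [((Polynomial.hasDerivAt _ t).fun_mul hexponent.exp).deriv]
    simp only [eval_add, eval_mul, eval_C, eval_X]
    ring

lemma integral_pow_gaussianReal (n : ℕ) :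
    ∫ x, x ^ n ∂gaussianReal μ v = ((gaussianMgfStep μ v)^[n] 1).eval 0 := by
  have h := iteratedDeriv_mgf_zero (X := id) (μ := gaussianReal μ v) (by simp) n
  rw [iteratedDeriv_mgf_gaussianReal] at h
  simpa using h.symm

lemma integral_sq_gaussianReal : ∫ x, x ^ 2 ∂gaussianReal μ v = μ ^ 2 + v := by
  simp only [integral_pow_gaussianReal, Function.iterate_succ_apply', Function.iterate_zero_apply,
    gaussianMgfStep, derivative_add, derivative_mul, derivative_one, derivative_C, derivative_X,
    map_zero, eval_add, eval_mul, eval_zero, eval_one, eval_C, eval_X]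
  ring

lemma integral_pow_four_gaussianReal :
    ∫ x, x ^ 4 ∂gaussianReal μ v = μ ^ 4 + 6 * μ ^ 2 * v + 3 * v ^ 2 := by
  simp only [integral_pow_gaussianReal, Function.iterate_succ_apply', Function.iterate_zero_apply,
    gaussianMgfStep, derivative_add, derivative_mul, derivative_one, derivative_C, derivative_X,
    map_zero, eval_add, eval_mul, eval_zero, eval_one, eval_C, eval_X]
  ring

lemma memLp_sq_gaussianReal : MemLp (fun x => x ^ 2) 2 (gaussianReal μ v) := by
  refine (memLp_two_iff_integrable_sq (by fun_prop)).2 ?_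
  simpa [← pow_mul] using
    integrable_pow_of_mem_interior_integrableExpSet (X := id) (μ := gaussianReal μ v) (by simp) 4

lemma variance_sq_gaussianReal :
    Var[fun x => x ^ 2; gaussianReal μ v] = 4 * μ ^ 2 * v + 2 * v ^ 2 := by
  rw [variance_eq_sub memLp_sq_gaussianReal]
  simp only [Pi.pow_apply, ← pow_mul]
  rw [integral_pow_four_gaussianReal, integral_sq_gaussianReal]
  ring

end GaussianMoments

variable {Ω : Type*} [MeasurableSpace Ω] {P : Measure Ω}

section HasLawGaussian

variable {Y : Ω → ℝ} {μ : ℝ} {v : ℝ≥0}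

lemma HasLaw.memLp_sq_of_gaussianReal (hY : HasLaw Y (gaussianReal μ v) P) :
    MemLp (fun ω => Y ω ^ 2) 2 P := by
  have h : MemLp (fun x => x ^ 2) 2 (P.map Y) := hY.map_eq ▸ memLp_sq_gaussianReal
  exact h.comp_of_map hY.aemeasurable

lemma HasLaw.integral_sq_of_gaussianReal (hY : HasLaw Y (gaussianReal μ v) P) :
    ∫ ω, Y ω ^ 2 ∂P = μ ^ 2 + v := by
  rw [← integral_sq_gaussianReal, ← hY.integral_comp (by fun_prop)]
  rfl

lemma HasLaw.variance_sq_of_gaussianReal (hY : HasLaw Y (gaussianReal μ v) P) :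
    Var[fun ω => Y ω ^ 2; P] = 4 * μ ^ 2 * v + 2 * v ^ 2 := by
  rw [← variance_sq_gaussianReal, ← hY.map_eq, variance_map (by fun_prop) hY.aemeasurable]
  rfl

end HasLawGaussian

variable [IsProbabilityMeasure P] {ι : Type*} [Fintype ι]

lemma integral_sq_sum_of_pairwise_indepFun {Z : ι → Ω → ℝ} (hZ : ∀ i, MemLp (Z i) 2 P)
    (hind : Pairwise fun i j => Z i ⟂ᵢ[P] Z j) :
    ∫ ω, (∑ i, Z i ω) ^ 2 ∂P = (∑ i, ∫ ω, Z i ω ∂P) ^ 2 + ∑ i, Var[Z i; P] := by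
  have hvar := IndepFun.variance_sum (s := Finset.univ) (fun i _ => hZ i)
    (fun i _ j _ hij => hind hij)
  rw [variance_eq_sub (memLp_finsetSum' _ fun i _ => hZ i)] at hvar
  simp only [Finset.sum_apply, Pi.pow_apply] at hvar
  rw [integral_finsetSum _ fun i _ => (hZ i).integrable one_le_two] at hvar
  linarith

lemma integral_sum_sq_sq_of_gaussianReal {Y : ι → Ω → ℝ} {c : ι → ℝ} {v : ℝ≥0}
    (hY : ∀ i, HasLaw (Y i) (gaussianReal (c i) v) P)
    (hind : Pairwise fun i j => Y i ⟂ᵢ[P] Y j) :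
    ∫ ω, (∑ i, Y i ω ^ 2) ^ 2 ∂P
      = (∑ i, c i ^ 2 + Fintype.card ι * v) ^ 2 + 4 * v * ∑ i, c i ^ 2
        + 2 * Fintype.card ι * v ^ 2 := by
  rw [integral_sq_sum_of_pairwise_indepFun (fun i => (hY i).memLp_sq_of_gaussianReal)
    fun i j hij => (hind hij).comp (measurable_id.pow_const 2) (measurable_id.pow_const 2)]
  simp only [fun i => (hY i).integral_sq_of_gaussianReal,
    fun i => (hY i).variance_sq_of_gaussianReal, Finset.sum_add_distrib, ← Finset.sum_mul,
    ← Finset.mul_sum, Finset.sum_const, Finset.card_univ, nsmul_eq_mul]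
  ring

end ProbabilityTheory

namespace IIDGaussianCoords

variable {Ω : Type*} [MeasurableSpace Ω] {P : Measure Ω} {ι : Type*} {p : ℕ} {σ : ℝ}
  {ε : ι → Ω → EuclideanSpace ℝ (Fin p)} {i j : ι}

lemma measurable_coord (h : IIDGaussianCoords P σ ε) (i : ι) (k : Fin p) :
    Measurable fun ω => ε i ω k :=
  (measurable_pi_apply k).comp ((WithLp.measurable_ofLp _ _).comp (h.1 i))

lemma hasLaw_add_sub_apply (h : IIDGaussianCoords P σ ε) (hij : i ≠ j)
    (c : EuclideanSpace ℝ (Fin p)) (k : Fin p) :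
    HasLaw (fun ω => (c + ε i ω - ε j ω) k) (gaussianReal (c k) (2 * σ ^ 2).toNNReal) P := by
  have hi : HasLaw (fun ω => ε i ω k) (gaussianReal 0 ⟨σ ^ 2, sq_nonneg σ⟩) P :=
    ⟨(h.measurable_coord i k).aemeasurable, h.2.2 i k⟩
  have hj : HasLaw (fun ω => -ε j ω k) (gaussianReal 0 ⟨σ ^ 2, sq_nonneg σ⟩) P := by
    simpa [Pi.neg_def] using gaussianReal_neg ⟨(h.measurable_coord j k).aemeasurable, h.2.2 j k⟩
  have hind : (fun ω => ε i ω k) ⟂ᵢ[P] fun ω => -ε j ω k :=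
    (h.2.1.indepFun (i := (i, k)) (j := (j, k)) (by simp [hij])).comp measurable_id measurable_neg
  have hsum := gaussianReal_add_gaussianReal_of_indepFun hind hi.map_eq hj.map_eq
  have := gaussianReal_const_add ⟨hi.aemeasurable.add hj.aemeasurable, hsum⟩ (c k)
  rw [zero_add, zero_add] at this
  convert this using 2 with ω
  · simp [sub_eq_add_neg, add_assoc]
  · exact (Real.toNNReal_of_nonneg (by positivity)).trans (NNReal.eq (two_mul _))

lemma indepFun_add_sub_apply (h : IIDGaussianCoords P σ ε) (hij : i ≠ j)
    (c : EuclideanSpace ℝ (Fin p)) :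
    Pairwise fun k l : Fin p =>
      (fun ω => (c + ε i ω - ε j ω) k) ⟂ᵢ[P] fun ω => (c + ε i ω - ε j ω) l := by
  intro k l hkl
  have := h.2.1.indepFun_prodMk_prodMk (fun q => h.measurable_coord q.1 q.2) (i, k) (j, k)
    (i, l) (j, l) (by simp [hkl]) (by simp [hij]) (by simp [hij.symm]) (by simp [hkl])
  exact this.comp (φ := fun x : ℝ × ℝ => c k + x.1 - x.2) (ψ := fun x : ℝ × ℝ => c l + x.1 - x.2)
    (by fun_prop) (by fun_prop)

lemma memLp_norm_add_sub_sq [IsProbabilityMeasure P] (h : IIDGaussianCoords P σ ε) (hij : i ≠ j)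
    (c : EuclideanSpace ℝ (Fin p)) :
    MemLp (fun ω => ‖c + ε i ω - ε j ω‖ ^ 2) 2 P := by
  simp only [EuclideanSpace.real_norm_sq_eq]
  exact memLp_finsetSum _ fun k _ => (h.hasLaw_add_sub_apply hij c k).memLp_sq_of_gaussianReal

lemma integral_norm_add_sub_sq_sq [IsProbabilityMeasure P] (h : IIDGaussianCoords P σ ε)
    (hij : i ≠ j) (c : EuclideanSpace ℝ (Fin p)) :
    ∫ ω, (‖c + ε i ω - ε j ω‖ ^ 2) ^ 2 ∂P
      = (‖c‖ ^ 2 + 2 * p * σ ^ 2) ^ 2 + 8 * σ ^ 2 * ‖c‖ ^ 2 + 8 * p * σ ^ 4 := by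
  simp only [EuclideanSpace.real_norm_sq_eq]
  rw [integral_sum_sq_sq_of_gaussianReal (h.hasLaw_add_sub_apply hij c)
    (h.indepFun_add_sub_apply hij c)]
  simp only [Fintype.card_fin, Real.coe_toNNReal _ (by positivity : 0 ≤ 2 * σ ^ 2)]
  ring

end IIDGaussianCoords

lemma integral_mul_le_sqrt_mul_sqrt {Ω : Type*} [MeasurableSpace Ω] {P : Measure Ω}
    {f g : Ω → ℝ} (hf₀ : 0 ≤ᵐ[P] f) (hg₀ : 0 ≤ᵐ[P] g) (hf : MemLp f 2 P) (hg : MemLp g 2 P) :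
    ∫ ω, f ω * g ω ∂P ≤ √(∫ ω, f ω ^ 2 ∂P) * √(∫ ω, g ω ^ 2 ∂P) := by
  have := integral_mul_le_Lp_mul_Lq_of_nonneg Real.HolderConjugate.two_two hf₀ hg₀
    (by simpa using hf) (by simpa using hg)
  simpa [Real.sqrt_eq_rpow] using this

theorem stmt_6_general {Ω : Type*} [MeasurableSpace Ω] (P : Measure Ω) [IsProbabilityMeasure P]
    (p : ℕ) (σ : ℝ) (hσ : 0 < σ)
    (ε : Fin 3 → Ω → EuclideanSpace ℝ (Fin p))
    (hiid : IIDGaussianCoords P σ ε)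
    (cij cij' : EuclideanSpace ℝ (Fin p)) :
    ∫ ω, ‖cij + ε 0 ω - ε 1 ω‖ ^ 2 * ‖cij' + ε 0 ω - ε 2 ω‖ ^ 2 ∂P
      ≤ 4 * σ ^ 4 * Real.sqrt
          (((p + (‖cij‖ / (Real.sqrt 2 * σ)) ^ 2) ^ 2
              + 2 * (p + 2 * (‖cij‖ / (Real.sqrt 2 * σ)) ^ 2))
            * ((p + (‖cij'‖ / (Real.sqrt 2 * σ)) ^ 2) ^ 2
              + 2 * (p + 2 * (‖cij'‖ / (Real.sqrt 2 * σ)) ^ 2))) := by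
  have h01 : (0 : Fin 3) ≠ 1 := by decide
  have h02 : (0 : Fin 3) ≠ 2 := by decide
  have hmoment (r : ℝ) : (r ^ 2 + 2 * p * σ ^ 2) ^ 2 + 8 * σ ^ 2 * r ^ 2 + 8 * p * σ ^ 4
      = (2 * σ ^ 2) ^ 2 * ((p + (r / (√2 * σ)) ^ 2) ^ 2 + 2 * (p + 2 * (r / (√2 * σ)) ^ 2)) := by
    rw [div_pow, mul_pow (√2), Real.sq_sqrt zero_le_two]
    field_simp
    ring
  refine (integral_mul_le_sqrt_mul_sqrt (ae_of_all _ fun _ => by positivity)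
    (ae_of_all _ fun _ => by positivity) (hiid.memLp_norm_add_sub_sq h01 cij)
    (hiid.memLp_norm_add_sub_sq h02 cij')).trans_eq ?_
  rw [hiid.integral_norm_add_sub_sq_sq h01, hiid.integral_norm_add_sub_sq_sq h02,
    hmoment, hmoment, Real.sqrt_mul' _ (by positivity), Real.sqrt_mul' _ (by positivity),
    Real.sqrt_sq (by positivity), Real.sqrt_mul (by positivity)]
  ring

theorem stmt_6 {Ω : Type*} [MeasurableSpace Ω] (P : Measure Ω) [IsProbabilityMeasure P]
    (p : ℕ) (hp : 1 ≤ p) (σ : ℝ) (hσ : 0 < σ)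
    (ε : Fin 3 → Ω → EuclideanSpace ℝ (Fin p))
    (hiid : IIDGaussianCoords P σ ε)
    (cij cij' : EuclideanSpace ℝ (Fin p)) :
    ∫ ω, ‖cij + ε 0 ω - ε 1 ω‖ ^ 2 * ‖cij' + ε 0 ω - ε 2 ω‖ ^ 2 ∂P
      ≤ 4 * σ ^ 4 * Real.sqrt
          (((p + (‖cij‖ / (Real.sqrt 2 * σ)) ^ 2) ^ 2
              + 2 * (p + 2 * (‖cij‖ / (Real.sqrt 2 * σ)) ^ 2))
            * ((p + (‖cij'‖ / (Real.sqrt 2 * σ)) ^ 2) ^ 2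
              + 2 * (p + 2 * (‖cij'‖ / (Real.sqrt 2 * σ)) ^ 2))) :=
  stmt_6_general P p σ hσ ε hiid cij cij'
end

section
/- Let ε_i, ε_j, ε_{j'} be three mutually independent random vectors in ℝ^p with i.i.d. N(0,σ²) coordinates, let c_{ij}, c_{ij'} ∈ ℝ^p be fixed vectors with c_{jj'} := c_{ij'} − c_{ij}, and set A_{ij} = ‖c_{ij} + ε_i − ε_j‖₂, A_{ij'} = ‖c_{ij'} + ε_i − ε_{j'}‖₂, λ_{ij} = ‖c_{ij}‖₂/(√2 σ), λ_{ij'} = ‖c_{ij'}‖₂/(√2 σ), λ_{jj'} = ‖c_{jj'}‖₂/(√2 σ). Then cov(A_{ij}, A_{ij'}) ≥ −σ²(p + λ_{ij}² + λ_{ij'}² − λ_{jj'}²) − E(A_{ij}) E(A_{ij'}). -/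
/-! With `u = c_ij + ε_i - ε_j` and `v = c_ij' + ε_i - ε_j'`, Cauchy–Schwarz gives
`‖u‖ ‖v‖ ≥ -⟪u, v⟫` pointwise, and the product of the means cancels from both sides. In
`E⟪u, v⟫` independence and centring kill every cross term except `E‖ε_i‖² = pσ²`, so
`E⟪u, v⟫ = ⟪c_ij, c_ij'⟫ + pσ²`; by polarisation `⟪c_ij, c_ij'⟫ = σ² (λ_ij² + λ_ij'² - λ_jj'²)`. -/

open MeasureTheory ProbabilityTheory

section Covariance

variable {Ω : Type*} [MeasurableSpace Ω] {P : Measure Ω} [IsProbabilityMeasure P]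

lemma integral_add_sub_mul_add_sub_of_indepFun {X Y Z : Ω → ℝ}
    (hX : MemLp X 2 P) (hY : MemLp Y 2 P) (hZ : MemLp Z 2 P)
    (hXY : X ⟂ᵢ[P] Y) (hXZ : X ⟂ᵢ[P] Z) (hYZ : Y ⟂ᵢ[P] Z) (a b : ℝ) :
    ∫ ω, (a + X ω - Y ω) * (b + X ω - Z ω) ∂P
      = (a + P[X] - P[Y]) * (b + P[X] - P[Z]) + Var[X; P] := by
  have hU : MemLp (fun ω => a + X ω - Y ω) 2 P := ((memLp_const a).add hX).sub hY
  have hV : MemLp (fun ω => b + X ω - Z ω) 2 P := ((memLp_const b).add hX).sub hZ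
  have hcov : cov[fun ω => a + X ω - Y ω, fun ω => b + X ω - Z ω; P] = Var[X; P] := by
    simp_rw [add_sub_assoc]
    rw [covariance_const_add_left (X := fun ω => X ω - Y ω) ((hX.sub hY).integrable one_le_two),
      covariance_const_add_right (Y := fun ω => X ω - Z ω) ((hX.sub hZ).integrable one_le_two),
      covariance_fun_sub_fun_sub hX hY hX hZ, covariance_self hX.aemeasurable,
      hXZ.covariance_eq_zero hX hZ, hXY.symm.covariance_eq_zero hY hX,
      hYZ.covariance_eq_zero hY hZ]
    ring
  have hmean : ∀ (c : ℝ) {W : Ω → ℝ}, MemLp W 2 P →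
      P[fun ω => c + X ω - W ω] = c + P[X] - P[W] := fun c W hW => by
    change ∫ ω, c + X ω - W ω ∂P = _
    rw [integral_sub (f := fun ω => c + X ω) ((integrable_const c).add (hX.integrable one_le_two))
      (hW.integrable one_le_two), integral_add (integrable_const c) (hX.integrable one_le_two)]
    simp
  have := covariance_eq_sub hU hV
  rw [hcov, hmean a hY, hmean b hZ] at this
  simp only [Pi.mul_def] at this
  linarith

end Covariance

namespace IIDGaussianCoords

variable {Ω ι : Type*} [MeasurableSpace Ω] {P : Measure Ω} {p : ℕ} {σ : ℝ}
  {ε : ι → Ω → EuclideanSpace ℝ (Fin p)}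

-- The variance is written `(σ ^ 2).toNNReal`: the anonymous constructor of the definition has
-- type `{r // 0 ≤ r}` only, on which the `gaussianReal` instances and lemmas do not fire.
lemma hasLaw_coord (h : IIDGaussianCoords P σ ε) (i : ι) (k : Fin p) :
    HasLaw (fun ω => ε i ω k : Ω → ℝ) (gaussianReal 0 (σ ^ 2).toNNReal) P where
  aemeasurable := (measurable_pi_apply k).comp ((WithLp.measurable_ofLp _ _).comp (h.1 i))
    |>.aemeasurable
  map_eq := by rw [Real.toNNReal_of_nonneg (sq_nonneg σ)]; exact h.2.2 i k

lemma memLp_coord (h : IIDGaussianCoords P σ ε) (i : ι) (k : Fin p) :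
    MemLp (fun ω => ε i ω k : Ω → ℝ) 2 P :=
  (h.hasLaw_coord i k).hasGaussianLaw.memLp_two

lemma integral_coord (h : IIDGaussianCoords P σ ε) (i : ι) (k : Fin p) :
    P[(fun ω => ε i ω k : Ω → ℝ)] = 0 := by
  rw [(h.hasLaw_coord i k).integral_eq, integral_id_gaussianReal]

lemma variance_coord (h : IIDGaussianCoords P σ ε) (i : ι) (k : Fin p) :
    Var[(fun ω => ε i ω k : Ω → ℝ); P] = σ ^ 2 := by
  rw [(h.hasLaw_coord i k).variance_eq, variance_id_gaussianReal,
    Real.coe_toNNReal _ (sq_nonneg σ)]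

lemma indepFun_coord (h : IIDGaussianCoords P σ ε) {i j : ι} (hij : i ≠ j) (k l : Fin p) :
    (fun ω => ε i ω k : Ω → ℝ) ⟂ᵢ[P] (fun ω => ε j ω l : Ω → ℝ) :=
  h.2.1.indepFun (i := (i, k)) (j := (j, l)) (by simp [hij])

lemma memLp (h : IIDGaussianCoords P σ ε) (i : ι) : MemLp (ε i) 2 P :=
  MemLp.of_eval_piLp (h.memLp_coord i)

variable [IsProbabilityMeasure P] {i j j' : ι}

lemma integral_inner_add_sub (h : IIDGaussianCoords P σ ε)
    (hij : i ≠ j) (hij' : i ≠ j') (hjj' : j ≠ j') (c c' : EuclideanSpace ℝ (Fin p)) :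
    ∫ ω, inner ℝ (c + ε i ω - ε j ω) (c' + ε i ω - ε j' ω) ∂P = inner ℝ c c' + p * σ ^ 2 := by
  have hcoord : ∀ ω, inner ℝ (c + ε i ω - ε j ω) (c' + ε i ω - ε j' ω)
      = ∑ k, (c k + ε i ω k - ε j ω k) * (c' k + ε i ω k - ε j' ω k) := fun ω => by
    simp [PiLp.inner_apply, mul_comm]
  have hX := h.memLp_coord i
  have hY := h.memLp_coord j
  have hZ := h.memLp_coord j'
  simp_rw [hcoord]
  have hint : ∀ k,
      Integrable (fun ω => (c k + ε i ω k - ε j ω k) * (c' k + ε i ω k - ε j' ω k)) P :=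
    fun k => (((memLp_const (c k)).add (hX k)).sub (hY k)).integrable_mul
      (((memLp_const (c' k)).add (hX k)).sub (hZ k))
  rw [integral_finsetSum _ fun k _ => hint k]
  have hk : ∀ k, ∫ ω, (c k + ε i ω k - ε j ω k) * (c' k + ε i ω k - ε j' ω k) ∂P
      = c k * c' k + σ ^ 2 := fun k => by
    rw [integral_add_sub_mul_add_sub_of_indepFun (hX k) (hY k) (hZ k)
      (h.indepFun_coord hij k k) (h.indepFun_coord hij' k k) (h.indepFun_coord hjj' k k),
      h.integral_coord, h.integral_coord, h.integral_coord, h.variance_coord]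
    ring
  simp [hk, Finset.sum_add_distrib, PiLp.inner_apply, mul_comm]

lemma neg_inner_add_sub_le_integral_norm_mul (h : IIDGaussianCoords P σ ε)
    (hij : i ≠ j) (hij' : i ≠ j') (hjj' : j ≠ j') (c c' : EuclideanSpace ℝ (Fin p)) :
    -(inner ℝ c c' + p * σ ^ 2)
      ≤ ∫ ω, ‖c + ε i ω - ε j ω‖ * ‖c' + ε i ω - ε j' ω‖ ∂P := by
  have hu : MemLp (fun ω => c + ε i ω - ε j ω) 2 P :=
    ((memLp_const c).add (h.memLp i)).sub (h.memLp j)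
  have hv : MemLp (fun ω => c' + ε i ω - ε j' ω) 2 P :=
    ((memLp_const c').add (h.memLp i)).sub (h.memLp j')
  have hnorm : Integrable (fun ω => ‖c + ε i ω - ε j ω‖ * ‖c' + ε i ω - ε j' ω‖) P :=
    hu.norm.integrable_mul hv.norm
  have hinner : Integrable (fun ω => inner ℝ (c + ε i ω - ε j ω) (c' + ε i ω - ε j' ω)) P :=
    hnorm.mono' (hu.aestronglyMeasurable.inner hv.aestronglyMeasurable)
      (.of_forall fun ω => (Real.norm_eq_abs _).trans_le (abs_real_inner_le_norm _ _))
  rw [← h.integral_inner_add_sub hij hij' hjj', ← integral_neg]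
  exact integral_mono hinner.neg hnorm fun ω => (neg_le_abs _).trans (abs_real_inner_le_norm _ _)

end IIDGaussianCoords

theorem stmt_8_general {Ω : Type*} [MeasurableSpace Ω] (P : Measure Ω) [IsProbabilityMeasure P]
    (p : ℕ) (σ : ℝ) (hσ : 0 < σ)
    (ε : Fin 3 → Ω → EuclideanSpace ℝ (Fin p))
    (hiid : IIDGaussianCoords P σ ε)
    (cij cij' : EuclideanSpace ℝ (Fin p)) :
    (∫ ω, ‖cij + ε 0 ω - ε 1 ω‖ * ‖cij' + ε 0 ω - ε 2 ω‖ ∂P)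
        - (∫ ω, ‖cij + ε 0 ω - ε 1 ω‖ ∂P) * ∫ ω, ‖cij' + ε 0 ω - ε 2 ω‖ ∂P
      ≥ -(σ ^ 2) * (p + (‖cij‖ / (Real.sqrt 2 * σ)) ^ 2
            + (‖cij'‖ / (Real.sqrt 2 * σ)) ^ 2 - (‖cij' - cij‖ / (Real.sqrt 2 * σ)) ^ 2)
        - (∫ ω, ‖cij + ε 0 ω - ε 1 ω‖ ∂P) * ∫ ω, ‖cij' + ε 0 ω - ε 2 ω‖ ∂P := by
  have hbound := hiid.neg_inner_add_sub_le_integral_norm_mul (i := 0) (j := 1) (j' := 2)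
    (by decide) (by decide) (by decide) cij cij'
  have hpolar : σ ^ 2 * (p + (‖cij‖ / (Real.sqrt 2 * σ)) ^ 2
      + (‖cij'‖ / (Real.sqrt 2 * σ)) ^ 2 - (‖cij' - cij‖ / (Real.sqrt 2 * σ)) ^ 2)
      = inner ℝ cij cij' + p * σ ^ 2 := by
    rw [real_inner_eq_norm_mul_self_add_norm_mul_self_sub_norm_sub_mul_self_div_two,
      norm_sub_rev, div_pow, div_pow, div_pow, mul_pow, Real.sq_sqrt zero_le_two]
    field_simp
    ring
  linarith

theorem stmt_8 {Ω : Type*} [MeasurableSpace Ω] (P : Measure Ω) [IsProbabilityMeasure P]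
    (p : ℕ) (hp : 1 ≤ p) (σ : ℝ) (hσ : 0 < σ)
    (ε : Fin 3 → Ω → EuclideanSpace ℝ (Fin p))
    (hiid : IIDGaussianCoords P σ ε)
    (cij cij' : EuclideanSpace ℝ (Fin p)) :
    (∫ ω, ‖cij + ε 0 ω - ε 1 ω‖ * ‖cij' + ε 0 ω - ε 2 ω‖ ∂P)
        - (∫ ω, ‖cij + ε 0 ω - ε 1 ω‖ ∂P) * ∫ ω, ‖cij' + ε 0 ω - ε 2 ω‖ ∂P
      ≥ -(σ ^ 2) * (p + (‖cij‖ / (Real.sqrt 2 * σ)) ^ 2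
            + (‖cij'‖ / (Real.sqrt 2 * σ)) ^ 2 - (‖cij' - cij‖ / (Real.sqrt 2 * σ)) ^ 2)
        - (∫ ω, ‖cij + ε 0 ω - ε 1 ω‖ ∂P) * ∫ ω, ‖cij' + ε 0 ω - ε 2 ω‖ ∂P :=
  stmt_8_general P p σ hσ ε hiid cij cij'
end

section
/- Let ε_1, …, ε_n (n ≥ 2) be mutually independent random vectors in ℝ^p with i.i.d. N(0,σ²) coordinates, let X_1, …, X_n, θ_1, …, θ_n ∈ ℝ^p be fixed vectors, let d_{ij} ≥ 0 (1 ≤ i < j ≤ n) and a ∈ ℝ be constants, and define Δ = Σ_{1 ≤ i < j ≤ n} ( d_{ij} − a ‖X_i + θ_i + ε_i − X_j − θ_j − ε_j‖₂ )². Set A_{ij} = ‖X_i + θ_i + ε_i − X_j − θ_j − ε_j‖₂ and λ_{ij} = ‖X_i + θ_i − X_j − θ_j‖₂/(√2 σ). Then E(Δ) = Σ_{1 ≤ i < j ≤ n} [ d_{ij}² + 2a²σ²(p + λ_{ij}²) − 2 a d_{ij} E(A_{ij}) ]. -/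
open MeasureTheory ProbabilityTheory

open scoped NNReal ENNReal

/-! With `c = X i + θ i - X j - θ j`, the `k`-th coordinate of `X i + θ i + ε i - X j - θ j - ε j`
is `c k + ε i k - ε j k`, a sum of independent Gaussians, hence `N(c k, 2σ²)`. Summing second
moments over the coordinates gives `E[A_{ij}²] = ‖c‖² + 2pσ² = 2σ²(p + λ_{ij}²)`, and expanding
`(d_{ij} - a A_{ij})²` yields the formula by linearity of expectation. -/

section GaussianMoments

variable {Ω : Type*} {mΩ : MeasurableSpace Ω} {P : Measure Ω}

lemma memLp_of_hasLaw_gaussianReal {X : Ω → ℝ} {μ : ℝ} {v : ℝ≥0}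
    (hX : HasLaw X (gaussianReal μ v) P) {q : ℝ≥0∞} (hq : q ≠ ∞) : MemLp X q P :=
  (memLp_map_measure_iff aestronglyMeasurable_id hX.aemeasurable).1
    (hX.map_eq ▸ memLp_id_gaussianReal' q hq)

lemma integral_sq_of_hasLaw_gaussianReal {X : Ω → ℝ} {μ : ℝ} {v : ℝ≥0}
    (hX : HasLaw X (gaussianReal μ v) P) : ∫ ω, X ω ^ 2 ∂P = μ ^ 2 + v := by
  have := hX.isProbabilityMeasure
  have h := variance_eq_sub (memLp_of_hasLaw_gaussianReal hX ENNReal.ofNat_ne_top)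
  rw [hX.variance_eq, variance_id_gaussianReal, hX.integral_eq, integral_id_gaussianReal] at h
  simp only [Pi.pow_apply] at h
  linarith

lemma hasLaw_sub_gaussianReal_of_indepFun {X Y : Ω → ℝ} {m₁ m₂ : ℝ} {v₁ v₂ : ℝ≥0}
    (hX : HasLaw X (gaussianReal m₁ v₁) P) (hY : HasLaw Y (gaussianReal m₂ v₂) P)
    (hXY : IndepFun X Y P) :
    HasLaw (fun ω ↦ X ω - Y ω) (gaussianReal (m₁ - m₂) (v₁ + v₂)) P := by
  have h := IndepFun.hasLaw_fun_add hX (gaussianReal_neg hY)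
    (hXY.comp measurable_id measurable_neg)
  rw [gaussianReal_conv_gaussianReal] at h
  simpa [sub_eq_add_neg] using h

lemma integral_const_sub_mul_sq [IsProbabilityMeasure P] {A : Ω → ℝ} (hA : MemLp A 2 P)
    (d a : ℝ) :
    ∫ ω, (d - a * A ω) ^ 2 ∂P = d ^ 2 + a ^ 2 * ∫ ω, A ω ^ 2 ∂P - 2 * a * d * ∫ ω, A ω ∂P := by
  have hA1 : Integrable A P := hA.integrable one_le_two
  have hA2 : Integrable (fun ω ↦ A ω ^ 2) P := hA.integrable_sq
  have h : ∀ ω, (d - a * A ω) ^ 2 = (d ^ 2 + a ^ 2 * A ω ^ 2) - 2 * a * d * A ω := fun ω ↦ by ring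
  have hsum : Integrable (fun ω ↦ d ^ 2 + a ^ 2 * A ω ^ 2) P :=
    (integrable_const _).add (hA2.const_mul _)
  simp_rw [h]
  rw [integral_sub hsum (hA1.const_mul _), integral_add (integrable_const _) (hA2.const_mul _),
    integral_const_mul, integral_const_mul]
  simp

variable {ι : Type*} [Fintype ι] {W : Ω → EuclideanSpace ℝ ι} {c : EuclideanSpace ℝ ι}
  {v : ι → ℝ≥0}

lemma memLp_norm_of_hasLaw_gaussianReal
    (hW : ∀ k, HasLaw (fun ω ↦ W ω k) (gaussianReal (c k) (v k)) P) :
    MemLp (fun ω ↦ ‖W ω‖) 2 P :=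
  (MemLp.of_eval_piLp fun k ↦ memLp_of_hasLaw_gaussianReal (hW k) ENNReal.ofNat_ne_top).norm

lemma integral_norm_sq_of_hasLaw_gaussianReal
    (hW : ∀ k, HasLaw (fun ω ↦ W ω k) (gaussianReal (c k) (v k)) P) :
    ∫ ω, ‖W ω‖ ^ 2 ∂P = ‖c‖ ^ 2 + ∑ k, (v k : ℝ) := by
  simp only [EuclideanSpace.norm_sq_eq, Real.norm_eq_abs, sq_abs]
  rw [integral_finsetSum _ fun k _ ↦
    (memLp_of_hasLaw_gaussianReal (hW k) ENNReal.ofNat_ne_top).integrable_sq]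
  simp_rw [integral_sq_of_hasLaw_gaussianReal (hW _)]
  exact Finset.sum_add_distrib

lemma integrable_const_sub_mul_norm_sq_of_hasLaw_gaussianReal [IsFiniteMeasure P]
    (hW : ∀ k, HasLaw (fun ω ↦ W ω k) (gaussianReal (c k) (v k)) P) (d a : ℝ) :
    Integrable (fun ω ↦ (d - a * ‖W ω‖) ^ 2) P :=
  ((memLp_const d).sub ((memLp_norm_of_hasLaw_gaussianReal hW).const_mul a)).integrable_sq

lemma integral_const_sub_mul_norm_sq_of_hasLaw_gaussianReal [IsProbabilityMeasure P]
    (hW : ∀ k, HasLaw (fun ω ↦ W ω k) (gaussianReal (c k) (v k)) P) (d a : ℝ) :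
    ∫ ω, (d - a * ‖W ω‖) ^ 2 ∂P
      = d ^ 2 + a ^ 2 * (‖c‖ ^ 2 + ∑ k, (v k : ℝ)) - 2 * a * d * ∫ ω, ‖W ω‖ ∂P := by
  rw [integral_const_sub_mul_sq (memLp_norm_of_hasLaw_gaussianReal hW),
    integral_norm_sq_of_hasLaw_gaussianReal hW]

end GaussianMoments

theorem stmt_13_general {Ω : Type*} [MeasurableSpace Ω] (P : Measure Ω) [IsProbabilityMeasure P]
    (p : ℕ) (σ : ℝ) (hσ : 0 < σ) (n : ℕ)
    (ε : Fin n → Ω → EuclideanSpace ℝ (Fin p))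
    (hiid : IIDGaussianCoords P σ ε)
    (X θ : Fin n → EuclideanSpace ℝ (Fin p))
    (d : Fin n → Fin n → ℝ) (a : ℝ) :
    ∫ ω, ∑ i : Fin n, ∑ j ∈ Finset.Ioi i,
        (d i j - a * ‖X i + θ i + ε i ω - X j - θ j - ε j ω‖) ^ 2 ∂P
      = ∑ i : Fin n, ∑ j ∈ Finset.Ioi i,
          (d i j ^ 2
            + 2 * a ^ 2 * σ ^ 2
              * (p + (‖X i + θ i - X j - θ j‖ / (Real.sqrt 2 * σ)) ^ 2)
            - 2 * a * d i j
              * ∫ ω, ‖X i + θ i + ε i ω - X j - θ j - ε j ω‖ ∂P) := by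
  obtain ⟨hmeas, hindep, hmap⟩ := hiid
  set v : ℝ≥0 := ⟨σ ^ 2, sq_nonneg σ⟩
  have hv : (v : ℝ) = σ ^ 2 := rfl
  have hcoord (i : Fin n) (k : Fin p) : HasLaw (fun ω ↦ ε i ω k) (gaussianReal 0 v) P :=
    ⟨by fun_prop, hmap i k⟩
  have hdiff (i j : Fin n) (hij : i ≠ j) (k : Fin p) :
      HasLaw (fun ω ↦ (X i + θ i + ε i ω - X j - θ j - ε j ω) k)
        (gaussianReal ((X i + θ i - X j - θ j) k) (v + v)) P := by
    have hindep_ij := hindep.indepFun (i := (i, k)) (j := (j, k)) (by simp [hij])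
    have h := gaussianReal_const_add
      (hasLaw_sub_gaussianReal_of_indepFun (hcoord i k) (hcoord j k) hindep_ij)
      ((X i + θ i - X j - θ j) k)
    convert h using 2 <;> simp
    ring
  have hscale (c : EuclideanSpace ℝ (Fin p)) :
      a ^ 2 * (‖c‖ ^ 2 + ∑ _k : Fin p, ((v + v : ℝ≥0) : ℝ))
        = 2 * a ^ 2 * σ ^ 2 * (p + (‖c‖ / (Real.sqrt 2 * σ)) ^ 2) := by
    simp only [NNReal.coe_add, hv, Finset.sum_const, Finset.card_univ,
      Fintype.card_fin, nsmul_eq_mul, div_pow, mul_pow, Real.sq_sqrt zero_le_two]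
    field_simp
    ring
  have hint (i : Fin n) (j : Fin n) (hj : j ∈ Finset.Ioi i) :=
    integrable_const_sub_mul_norm_sq_of_hasLaw_gaussianReal
      (hdiff i j (Finset.mem_Ioi.mp hj).ne) (d i j) a
  rw [integral_finsetSum _ fun i _ ↦ integrable_finsetSum _ (hint i)]
  refine Finset.sum_congr rfl fun i _ ↦ ?_
  rw [integral_finsetSum _ (hint i)]
  refine Finset.sum_congr rfl fun j hj ↦ ?_
  rw [integral_const_sub_mul_norm_sq_of_hasLaw_gaussianReal
    (hdiff i j (Finset.mem_Ioi.mp hj).ne), hscale]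

theorem stmt_13 {Ω : Type*} [MeasurableSpace Ω] (P : Measure Ω) [IsProbabilityMeasure P]
    (p : ℕ) (hp : 1 ≤ p) (σ : ℝ) (hσ : 0 < σ) (n : ℕ) (hn : 2 ≤ n)
    (ε : Fin n → Ω → EuclideanSpace ℝ (Fin p))
    (hiid : IIDGaussianCoords P σ ε)
    (X θ : Fin n → EuclideanSpace ℝ (Fin p))
    (d : Fin n → Fin n → ℝ) (hd : ∀ i j : Fin n, i < j → 0 ≤ d i j) (a : ℝ) :
    ∫ ω, ∑ i : Fin n, ∑ j ∈ Finset.Ioi i,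
        (d i j - a * ‖X i + θ i + ε i ω - X j - θ j - ε j ω‖) ^ 2 ∂P
      = ∑ i : Fin n, ∑ j ∈ Finset.Ioi i,
          (d i j ^ 2
            + 2 * a ^ 2 * σ ^ 2
              * (p + (‖X i + θ i - X j - θ j‖ / (Real.sqrt 2 * σ)) ^ 2)
            - 2 * a * d i j
              * ∫ ω, ‖X i + θ i + ε i ω - X j - θ j - ε j ω‖ ∂P) :=
  stmt_13_general P p σ hσ n ε hiid X θ d a
end

section
/- Let W and M be nonempty finite sets of cardinalities n_W and n_M, let X_i ∈ ℝ^p for i ∈ W and Y_j ∈ ℝ^p for j ∈ M, let d_{ij} ∈ ℝ for i ∈ W, j ∈ M, let a > 0, and let B ∈ ℝ^p. Define C = (1/(n_W n_M)) Σ_{i ∈ W} Σ_{j ∈ M} (X_i − Y_j) and r² = | Σ_{i∈W} Σ_{j∈M} d_{ij}² / (a n_W n_M) − Σ_{i∈W} Σ_{j∈M} ‖X_i − Y_j‖₂² / (n_W n_M) + ‖ Σ_{i∈W} Σ_{j∈M} (X_i − Y_j) ‖₂² / (n_W² n_M²) |. If Σ_{i ∈ W} Σ_{j ∈ M} ( d_{ij}²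 − a ‖X_i − Y_j − B‖₂² ) = 0, then ‖B − C‖₂² ≤ r². -/
/-! Expanding `‖z - B‖²` and summing over all `n_W n_M` pairs gives the parallel-axis identity
`‖B - C‖² = (1/N) Σ ‖z_k - B‖² - (1/N) Σ ‖z_k‖² + ‖Σ z_k‖² / N²` for the differences
`z_k = X_i - Y_j` and their mean `C`. The hypothesis says `Σ ‖z_k - B‖² = Σ d_{ij}² / a`, so the
right-hand side is exactly the quantity inside the absolute value defining `r²`. -/

open Finset

section ParallelAxis

variable {ι E : Type*} [Fintype ι] [NormedAddCommGroup E] [InnerProductSpace ℝ E]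

theorem sum_norm_sub_sq_eq (z : ι → E) (b : E) :
    ∑ k, ‖z k - b‖ ^ 2
      = ∑ k, ‖z k‖ ^ 2 - 2 * inner ℝ (∑ k, z k) b + Fintype.card ι * ‖b‖ ^ 2 := by
  simp only [norm_sub_sq_real, sum_add_distrib, sum_sub_distrib, ← mul_sum, ← sum_inner,
    sum_const, card_univ, nsmul_eq_mul]

theorem norm_sub_mean_sq_eq [Nonempty ι] (z : ι → E) (b : E) :
    ‖b - (Fintype.card ι : ℝ)⁻¹ • ∑ k, z k‖ ^ 2
      = (∑ k, ‖z k - b‖ ^ 2) / Fintype.card ι - (∑ k, ‖z k‖ ^ 2) / Fintype.card ι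
        + ‖∑ k, z k‖ ^ 2 / (Fintype.card ι : ℝ) ^ 2 := by
  have hN : (Fintype.card ι : ℝ) ≠ 0 := Nat.cast_ne_zero.mpr Fintype.card_ne_zero
  rw [sum_norm_sub_sq_eq, norm_sub_sq_real, real_inner_smul_right, norm_smul, Real.norm_eq_abs,
    abs_inv, Nat.abs_cast, real_inner_comm]
  field_simp
  ring

end ParallelAxis

theorem stmt_18_general {W M : Type*} [Fintype W] [Fintype M] [Nonempty W] [Nonempty M]
    (p : ℕ)
    (X : W → EuclideanSpace ℝ (Fin p)) (Y : M → EuclideanSpace ℝ (Fin p))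
    (d : W → M → ℝ) (a : ℝ) (ha : 0 < a) (B : EuclideanSpace ℝ (Fin p))
    (C : EuclideanSpace ℝ (Fin p))
    (hC : C = ((Fintype.card W * Fintype.card M : ℝ))⁻¹ • ∑ i : W, ∑ j : M, (X i - Y j))
    (r2 : ℝ)
    (hr2 : r2 = |(∑ i : W, ∑ j : M, d i j ^ 2) / (a * (Fintype.card W * Fintype.card M))
        - (∑ i : W, ∑ j : M, ‖X i - Y j‖ ^ 2) / (Fintype.card W * Fintype.card M)
        + ‖∑ i : W, ∑ j : M, (X i - Y j)‖ ^ 2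
          / ((Fintype.card W : ℝ) ^ 2 * (Fintype.card M : ℝ) ^ 2)|)
    (hzero : ∑ i : W, ∑ j : M, (d i j ^ 2 - a * ‖X i - Y j - B‖ ^ 2) = 0) :
    ‖B - C‖ ^ 2 ≤ r2 := by
  let z : W × M → EuclideanSpace ℝ (Fin p) := fun k => X k.1 - Y k.2
  have hcard : (Fintype.card (W × M) : ℝ) = Fintype.card W * Fintype.card M := by
    rw [Fintype.card_prod, Nat.cast_mul]
  have hfit : ∑ k, ‖z k - B‖ ^ 2 = (∑ i : W, ∑ j : M, d i j ^ 2) / a := by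
    simp only [sum_sub_distrib, ← mul_sum, sub_eq_zero] at hzero
    rw [eq_div_iff ha.ne', hzero, Fintype.sum_prod_type, mul_comm]
  have hmean := norm_sub_mean_sq_eq z B
  simp only [hfit, hcard, z, Fintype.sum_prod_type] at hmean
  rw [hC, hr2, hmean, div_div, mul_pow]
  exact le_abs_self _

theorem stmt_18 {W M : Type*} [Fintype W] [Fintype M] [Nonempty W] [Nonempty M]
    (p : ℕ) (hp : 1 ≤ p)
    (X : W → EuclideanSpace ℝ (Fin p)) (Y : M → EuclideanSpace ℝ (Fin p))
    (d : W → M → ℝ) (a : ℝ) (ha : 0 < a) (B : EuclideanSpace ℝ (Fin p))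
    (C : EuclideanSpace ℝ (Fin p))
    (hC : C = ((Fintype.card W * Fintype.card M : ℝ))⁻¹ • ∑ i : W, ∑ j : M, (X i - Y j))
    (r2 : ℝ)
    (hr2 : r2 = |(∑ i : W, ∑ j : M, d i j ^ 2) / (a * (Fintype.card W * Fintype.card M))
        - (∑ i : W, ∑ j : M, ‖X i - Y j‖ ^ 2) / (Fintype.card W * Fintype.card M)
        + ‖∑ i : W, ∑ j : M, (X i - Y j)‖ ^ 2
          / ((Fintype.card W : ℝ) ^ 2 * (Fintype.card M : ℝ) ^ 2)|)
    (hzero : ∑ i : W, ∑ j : M, (d i j ^ 2 - a * ‖X i - Y j - B‖ ^ 2) = 0) :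
    ‖B - C‖ ^ 2 ≤ r2 :=
  stmt_18_general p X Y d a ha B C hC r2 hr2 hzero
end
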